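/- arXiv:2210.09299 — 2 statements merged into one kernel-verified Lean document; each statement's English description precedes it below -/
import Mathlib

section
/- For every Λ ∈ X and all real numbers x, t, y: the forward orbit g_{ℝ>0}(v_y g_t u_x Λ) = {g_s v_y g_t u_x Λ : s > 0} is precompact in X if and only if g_{ℝ>0}(u_x Λ) = {g_s u_x Λ : s > 0} is precompact in X. -/
open Matrix
noncomputable section

/-- `SL₂(ℝ)`. -/
abbrev SL2R := Matrix.SpecialLinearGroup (Fin 2) ℝ

/-- `SL₂(ℝ)` carries the topology induced from the space of matrices. -/
instance : TopologicalSpace SL2R :=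
  TopologicalSpace.induced (fun g : SL2R => (g : Matrix (Fin 2) (Fin 2) ℝ)) inferInstance

/-- The subgroup `SL₂(ℤ)` of `SL₂(ℝ)`. -/
def Gamma : Subgroup SL2R :=
  (Matrix.SpecialLinearGroup.map (n := Fin 2) (Int.castRingHom ℝ)).range

/-- `X = SL₂(ℝ)/SL₂(ℤ)`, the space of unimodular lattices in `ℝ²`,
with the quotient topology. -/
abbrev XSpace := SL2R ⧸ Gamma

/-- The diagonal matrix `g_t = [[eᵗ, 0], [0, e⁻ᵗ]]`. -/
def gDiag (t : ℝ) : SL2R :=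
  ⟨!![Real.exp t, 0; 0, Real.exp (-t)], by
    simp [Matrix.det_fin_two_of, ← Real.exp_add]⟩

/-- The upper unipotent matrix `u_x = [[1, x], [0, 1]]`. -/
def uMat (x : ℝ) : SL2R :=
  ⟨!![1, x; 0, 1], by simp [Matrix.det_fin_two_of]⟩

/-- The lower unipotent matrix `v_y = [[1, 0], [y, 1]]`. -/
def vMat (y : ℝ) : SL2R :=
  ⟨!![1, 0; y, 1], by simp [Matrix.det_fin_two_of]⟩

/-- The lattice `Λ_α = u_α ℤ²` as a point of `X`. -/
def LatX (α : ℝ) : XSpace := QuotientGroup.mk (uMat α)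

/-- The full diagonal orbit `g_ℝ x = {g_t x : t ∈ ℝ}`. -/
def fullOrbit (x : XSpace) : Set XSpace := {y | ∃ t : ℝ, y = gDiag t • x}

/-- The forward diagonal orbit `g_{ℝ>0} x = {g_t x : t > 0}`. -/
def fwdOrbit (x : XSpace) : Set XSpace := {y | ∃ t : ℝ, 0 < t ∧ y = gDiag t • x}

/-- The backward diagonal orbit `g_{ℝ<0} x = {g_t x : t < 0}`. -/
def bwdOrbit (x : XSpace) : Set XSpace := {y | ∃ t : ℝ, t < 0 ∧ y = gDiag t • x}

/-!
Conjugating by the diagonal flow contracts the lower unipotent group: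
`g_s v_y = v_{y e^{-2s}} g_s`, and `g_s` commutes with `g_t`, so
`g_s (v_y g_t u_x Λ) = (v_{y e^{-2s}} g_t) (g_s u_x Λ)`. For `s > 0` the prefactor stays in the
compact set `{v_{y r} g_t : r ∈ [0, 1]}`, and in the Hausdorff space `X` a set obtained from a
precompact one by acting with a compact set of group elements is again precompact.
-/

-- The topology fixed on `SL2R` is definitionally Mathlib's subspace topology on `SL(2, ℝ)`.
instance : IsTopologicalGroup SL2R := Matrix.SpecialLinearGroup.topologicalGroup

-- Through `QuotientGroup.instT2Space`, this makes `XSpace` Hausdorff.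
instance isClosed_Gamma : IsClosed (Gamma : Set SL2R) :=
  (Int.isClosedEmbedding_coe_real.specialLinearGroup_map (n := Fin 2)
    (f := Int.castRingHom ℝ)).isClosed_range

@[fun_prop]
lemma continuous_vMat : Continuous vMat :=
  continuous_induced_rng.2 (show Continuous fun y : ℝ => !![(1 : ℝ), 0; y, 1] by fun_prop)

lemma gDiag_add (s t : ℝ) : gDiag (s + t) = gDiag s * gDiag t := by
  ext : 1
  rw [Matrix.SpecialLinearGroup.coe_mul]
  simp [gDiag, Real.exp_add, mul_comm]

lemma gDiag_mul_vMat (s y : ℝ) :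
    gDiag s * vMat y = vMat (y * Real.exp (-2 * s)) * gDiag s := by
  have hexp : y * Real.exp (-2 * s) * Real.exp s = Real.exp (-s) * y := by
    rw [mul_assoc, ← Real.exp_add]; ring_nf
  ext : 1
  rw [Matrix.SpecialLinearGroup.coe_mul, Matrix.SpecialLinearGroup.coe_mul]
  simp only [gDiag, vMat, Matrix.mul_fin_two, hexp]
  simp

section PrecompactTransfer

open Pointwise

variable {G X : Type*} [TopologicalSpace G] [TopologicalSpace X] [T2Space X]

lemma isCompact_closure_of_subset_smul [SMul G X] [ContinuousSMul G X] {K : Set G}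
    {S T : Set X} (hK : IsCompact K) (hT : IsCompact (closure T)) (hST : S ⊆ K • T) :
    IsCompact (closure S) :=
  have hKT : IsCompact (K • closure T) := hK.smul_set hT
  hKT.of_isClosed_subset isClosed_closure <|
    closure_minimal (hST.trans (Set.smul_subset_smul_left subset_closure)) hKT.isClosed

lemma isCompact_closure_image_iff_of_eq_smul [Group G] [ContinuousInv G] [MulAction G X]
    [ContinuousSMul G X] {ι : Type*} {I : Set ι} {f g : ι → X} {k : ι → G} {K : Set G}
    (hK : IsCompact K) (hk : Set.MapsTo k I K) (hfg : ∀ i ∈ I, f i = k i • g i) :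
    IsCompact (closure (f '' I)) ↔ IsCompact (closure (g '' I)) := by
  constructor
  · refine fun hf => isCompact_closure_of_subset_smul hK.inv hf ?_
    rintro _ ⟨i, hi, rfl⟩
    exact ⟨(k i)⁻¹, Set.inv_mem_inv.2 (hk hi), f i, ⟨i, hi, rfl⟩, by simp [hfg i hi]⟩
  · refine fun hg => isCompact_closure_of_subset_smul hK hg ?_
    rintro _ ⟨i, hi, rfl⟩
    exact ⟨k i, hk hi, g i, ⟨i, hi, rfl⟩, (hfg i hi).symm⟩

end PrecompactTransfer

lemma fwdOrbit_eq_image (p : XSpace) : fwdOrbit p = (fun s => gDiag s • p) '' Set.Ioi 0 := by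
  ext q
  simp [fwdOrbit, eq_comm]

lemma gDiag_smul_vMat_gDiag_uMat_smul (Λ : XSpace) (s t x y : ℝ) :
    gDiag s • (vMat y * gDiag t * uMat x) • Λ =
      (vMat (y * Real.exp (-2 * s)) * gDiag t) • gDiag s • uMat x • Λ := by
  simp only [smul_smul, ← mul_assoc, gDiag_mul_vMat]
  rw [mul_assoc _ (gDiag s), ← gDiag_add, add_comm, gDiag_add]
  simp only [mul_assoc]

/-- The forward orbit of `v_y g_t u_x Λ` is precompact iff the forward orbit of
`u_x Λ` is precompact. -/
theorem stmt9 (Λ : XSpace) (x t y : ℝ) :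
    IsCompact (closure (fwdOrbit ((vMat y * gDiag t * uMat x) • Λ))) ↔
      IsCompact (closure (fwdOrbit (uMat x • Λ))) := by
  have hK : IsCompact ((fun r => vMat (y * r) * gDiag t) '' Set.Icc 0 1) :=
    isCompact_Icc.image (by fun_prop)
  rw [fwdOrbit_eq_image, fwdOrbit_eq_image]
  refine isCompact_closure_image_iff_of_eq_smul hK (fun s hs => ⟨_, ?_, rfl⟩)
    fun s _ => gDiag_smul_vMat_gDiag_uMat_smul Λ s t x y
  exact ⟨(Real.exp_pos _).le, Real.exp_le_one_iff.2 (by linarith [Set.mem_Ioi.1 hs])⟩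
end
end

section
/- Let Λ be a unimodular lattice in ℝ² and let r = (r₁, r₂), s = (s₁, s₂) be a pair of consecutive minimal vectors in Λ with 0 ≤ r₂ < s₂, such that if r₂ = 0 then r₁s₁ ≤ 0, and with s₁ ≠ 0. Then r₁ ≠ 0 and x = −s₁/r₁ > 0; set y = r₂/s₂, n = ⌊1/x⌋ and w = r + n·s = (w₁, w₂). Then (s, w) is a pair of consecutive minimal vectors of Λ with 0 ≤ s₂ < w₂, the sign of s₁ is opposite to the sign of r₁, and −w₁/s₁ = {1/x} (the fractional part of 1/x) while s₂/w₂ = 1/(⌊1/x⌋ + y). -/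
open Matrix
noncomputable section

/-- The set of points of the unimodular lattice `g ℤ²` in `ℝ²`. -/
def latticePts (g : SL2R) : Set (Fin 2 → ℝ) :=
  {v | ∃ m : Fin 2 → ℤ, v = (g : Matrix (Fin 2) (Fin 2) ℝ).mulVec (fun i => (m i : ℝ))}

/-- `r` is a minimal vector of the lattice `Λ`: it is a nonzero lattice point, and any
nonzero lattice point `s` with `|s₁| ≤ |r₁|` and `|s₂| ≤ |r₂|` satisfies
`|s₁| = |r₁|` and `|s₂| = |r₂|`. -/
def IsMinimalVector (Λ : Set (Fin 2 → ℝ)) (r : Fin 2 → ℝ) : Prop :=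
  r ∈ Λ ∧ r ≠ 0 ∧ ∀ s ∈ Λ, s ≠ 0 → |s 0| ≤ |r 0| → |s 1| ≤ |r 1| →
    |s 0| = |r 0| ∧ |s 1| = |r 1|

/-- `(r, s)` is a pair of consecutive minimal vectors of `Λ`. -/
def ConsecutiveMinimalVectors (Λ : Set (Fin 2 → ℝ)) (r s : Fin 2 → ℝ) : Prop :=
  IsMinimalVector Λ r ∧ IsMinimalVector Λ s ∧ |r 1| < |s 1| ∧
    ¬∃ w : Fin 2 → ℝ, IsMinimalVector Λ w ∧ |r 1| < |w 1| ∧ |w 1| < |s 1|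

/-! Put `x = -s 0 / r 0`. Because `r` and `s` are consecutive, the box `|t 0| < |r 0|`,
`|t 1| < |s 1|` contains no nonzero lattice point: a minimal vector below such a point would lie
strictly between `r` and `s`. This forces `r 0 * s 0 < 0`, and it makes `(r, s)` a basis of the
lattice, since rounding the real coordinates of a lattice point in that basis leaves a remainder
inside the box. The point `a • r + b • s` has coordinates `(r 0 * (a - b * x), a * r 1 + b * s 1)`,
so the minimality of `w = r + ⌊x⁻¹⌋ • s` and the absence of minimal vectors between `s` and `w`
become elementary inequalities between the integers `a, b` and `x`, governed by
`⌊x⁻¹⌋ * x ≤ 1 < (⌊x⁻¹⌋ + 1) * x`. -/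

def latticeAddSubgroup (g : SL2R) : AddSubgroup (Fin 2 → ℝ) where
  carrier := latticePts g
  add_mem' := by
    rintro _ _ ⟨m, rfl⟩ ⟨k, rfl⟩
    refine ⟨m + k, ?_⟩
    rw [← mulVec_add]
    congr 1
    ext i
    simp
  zero_mem' := ⟨0, by simp only [Pi.zero_apply, Int.cast_zero]; exact (mulVec_zero _).symm⟩
  neg_mem' := by
    rintro _ ⟨m, rfl⟩
    refine ⟨-m, ?_⟩
    rw [← mulVec_neg]
    congr 1
    ext i
    simp

theorem coe_latticeAddSubgroup (g : SL2R) :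
    (latticeAddSubgroup g : Set (Fin 2 → ℝ)) = latticePts g :=
  rfl

open Submodule in
instance (g : SL2R) : DiscreteTopology (latticeAddSubgroup g) := by
  let e := (SpecialLinearGroup.toLin' g).toContinuousLinearEquiv.symm
  have h : Set.MapsTo e (latticeAddSubgroup g) (span ℤ (Set.range (Pi.basisFun ℝ (Fin 2)))) := by
    rintro _ ⟨m, rfl⟩
    rw [SetLike.mem_coe, Module.Basis.mem_span_iff_repr_mem]
    refine fun i => ⟨m i, ?_⟩
    change _ = (SpecialLinearGroup.toLin' g).symm (SpecialLinearGroup.toLin' g fun i => (m i : ℝ)) i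
    simp
  exact DiscreteTopology.of_continuous_injective
    (β := span ℤ (Set.range (Pi.basisFun ℝ (Fin 2)))) (e.continuous.restrict h)
    (Subtype.map_injective _ e.injective)

lemma abs_sub_lt_of_mul_pos {a b : ℝ} (hab : 0 < a * b) (h : |b| < |a|) : |b - a| < |a| := by
  rcases pos_and_pos_or_neg_and_neg_of_mul_pos hab with ⟨ha, hb⟩ | ⟨ha, hb⟩
  · rw [abs_of_pos ha, abs_of_pos hb] at h
    rw [abs_of_pos ha, abs_lt]
    constructor <;> linarith
  · rw [abs_of_neg ha, abs_of_neg hb] at h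
    rw [abs_of_neg ha, abs_lt]
    constructor <;> linarith

lemma abs_add_lt_of_mul_neg {a b : ℝ} (hab : a * b < 0) (h : |a| < 2 * |b|) : |a + b| < |b| := by
  rcases mul_neg_iff.1 hab with ⟨ha, hb⟩ | ⟨ha, hb⟩
  · rw [abs_of_pos ha, abs_of_neg hb] at h
    rw [abs_of_neg hb, abs_lt]
    constructor <;> linarith
  · rw [abs_of_neg ha, abs_of_pos hb] at h
    rw [abs_of_pos hb, abs_lt]
    constructor <;> linarith

lemma abs_mul_add_mul_le {c d a b : ℝ} (hc : |c| ≤ 1 / 2) (hd : |d| ≤ 1 / 2) :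
    |c * a + d * b| ≤ (|a| + |b|) / 2 :=
  calc |c * a + d * b| ≤ |c| * |a| + |d| * |b| := by
        rw [← abs_mul, ← abs_mul]; exact abs_add_le _ _
    _ ≤ 1 / 2 * |a| + 1 / 2 * |b| := by gcongr
    _ = (|a| + |b|) / 2 := by ring

section Coefficients

variable {x p q : ℝ} {a b n : ℤ}

lemma le_abs_intCast_mul (hx : 0 < x) (hb : b ≠ 0) : x ≤ |(b : ℝ) * x| := by
  rw [abs_mul, abs_of_pos hx]
  exact le_mul_of_one_le_left hx.le (by exact_mod_cast Int.one_le_abs hb)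

lemma eq_one_and_eq_of_le (hx : 0 < x) (hp : 0 ≤ p) (hq : 0 < q) (ha : 0 < a)
    (h₀ : a - b * x ≤ 1 - n * x) (h₁ : a * p + b * q ≤ p + n * q) : a = 1 ∧ b = n := by
  have ha' : (1 : ℝ) ≤ a := by exact_mod_cast ha
  have hbn : b ≤ n := by
    have : (b : ℝ) ≤ n := by nlinarith
    exact_mod_cast this
  have hbn' : (b : ℝ) ≤ n := by exact_mod_cast hbn
  have ha1 : a = 1 := by
    have : (a : ℝ) ≤ 1 := by nlinarith
    exact le_antisymm (by exact_mod_cast this) ha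
  subst ha1
  have : (n : ℝ) ≤ b := by push_cast at h₀; nlinarith
  exact ⟨rfl, le_antisymm hbn (by exact_mod_cast this)⟩

lemma eq_one_and_eq_of_abs_le (hx : 0 < x) (hp : 0 ≤ p) (hq : 0 < q) (hnx : 1 - n * x < x)
    (hab : a ≠ 0 ∨ b ≠ 0) (h₀ : |a - b * x| ≤ 1 - n * x) (h₁ : |a * p + b * q| ≤ p + n * q) :
    a = 1 ∧ b = n ∨ a = -1 ∧ b = -n := by
  rcases lt_trichotomy a 0 with ha | rfl | ha
  · have := eq_one_and_eq_of_le hx hp hq (neg_pos.2 ha) (b := -b) (n := n)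
      (by push_cast; linarith [neg_abs_le (a - b * x)])
      (by push_cast; linarith [neg_abs_le (a * p + b * q)])
    right; omega
  · have := le_abs_intCast_mul hx (hab.resolve_left (not_not.2 rfl))
    rw [← abs_neg] at this
    simp only [Int.cast_zero, zero_sub] at h₀
    linarith
  · exact .inl (eq_one_and_eq_of_le hx hp hq ha (le_abs_self _ |>.trans h₀)
      (le_abs_self _ |>.trans h₁))

lemma le_sub_mul_of_lt (hx : 0 < x) (hnx : n * x ≤ 1) (hp : 0 ≤ p) (hq : 0 < q) (ha : 0 < a)
    (h₁ : a * p + b * q < p + n * q) : x ≤ a - b * x := by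
  have ha' : (1 : ℝ) ≤ a := by exact_mod_cast ha
  have hbn : b + 1 ≤ n := by
    have : (b : ℝ) < n := by nlinarith
    exact_mod_cast this
  have hbn' : (b : ℝ) + 1 ≤ n := by exact_mod_cast hbn
  nlinarith

lemma le_abs_sub_mul_of_abs_lt (hx : 0 < x) (hnx : n * x ≤ 1) (hp : 0 ≤ p) (hq : 0 < q)
    (hab : a ≠ 0 ∨ b ≠ 0) (h₁ : |a * p + b * q| < p + n * q) : x ≤ |a - b * x| := by
  rcases lt_trichotomy a 0 with ha | rfl | ha
  · have := le_sub_mul_of_lt hx hnx hp hq (neg_pos.2 ha) (b := -b)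
      (by push_cast; linarith [neg_abs_le (a * p + b * q)])
    push_cast at this
    linarith [neg_abs_le (a - b * x)]
  · simpa using le_abs_intCast_mul hx (hab.resolve_left (not_not.2 rfl))
  · exact (le_sub_mul_of_lt hx hnx hp hq ha (le_abs_self _ |>.trans_lt h₁)).trans (le_abs_self _)

end Coefficients

theorem IsMinimalVector.abs_apply_zero_lt {Λ : Set (Fin 2 → ℝ)} {r s : Fin 2 → ℝ}
    (hs : IsMinimalVector Λ s) (hr : r ∈ Λ) (hr0 : r ≠ 0) (hrs : |r 1| < |s 1|) :
    |s 0| < |r 0| := by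
  by_contra! h
  exact hrs.ne (hs.2.2 r hr hr0 h hrs.le).2

section Lattice

variable {Λ : AddSubgroup (Fin 2 → ℝ)} {r s t : Fin 2 → ℝ}

lemma intCast_smul_mem (a : ℤ) (hr : r ∈ Λ) : (a : ℝ) • r ∈ Λ := by
  rw [Int.cast_smul_eq_zsmul]
  exact Λ.zsmul_mem hr a

theorem exists_isMinimalVector_le [DiscreteTopology Λ] (ht : t ∈ Λ) (ht0 : t ≠ 0) :
    ∃ v, IsMinimalVector Λ v ∧ |v 0| ≤ |t 0| ∧ |v 1| ≤ |t 1| := by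
  let S : Set (Fin 2 → ℝ) := {v | v ∈ Λ ∧ v ≠ 0 ∧ |v 0| ≤ |t 0| ∧ |v 1| ≤ |t 1|}
  have hS : S.Finite := by
    refine (Metric.finite_isBounded_inter_isClosed DiscreteTopology.isDiscrete
      (Metric.isBounded_Icc (-|t|) |t|) Λ.isClosed_of_discrete).subset ?_
    rintro v ⟨hv, -, h0, h1⟩
    rw [abs_le] at h0 h1
    exact ⟨⟨Fin.forall_fin_two.2 ⟨h0.1, h1.1⟩, Fin.forall_fin_two.2 ⟨h0.2, h1.2⟩⟩, hv⟩
  obtain ⟨v, ⟨hv, hv0, hvt0, hvt1⟩, hmin⟩ :=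
    S.exists_min_image (fun v => |v 0| + |v 1|) hS ⟨t, ht, ht0, le_rfl, le_rfl⟩
  refine ⟨v, ⟨hv, hv0, fun u hu hu0 h0 h1 => ?_⟩, hvt0, hvt1⟩
  have := hmin u ⟨hu, hu0, h0.trans hvt0, h1.trans hvt1⟩
  constructor <;> linarith

theorem ConsecutiveMinimalVectors.eq_zero_of_abs_lt [DiscreteTopology Λ]
    (h : ConsecutiveMinimalVectors Λ r s) (ht : t ∈ Λ) (h0 : |t 0| < |r 0|) (h1 : |t 1| < |s 1|) :
    t = 0 := by
  by_contra ht0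
  obtain ⟨v, hv, hvt0, hvt1⟩ := exists_isMinimalVector_le ht ht0
  have hvr1 : |v 1| ≤ |r 1| := by
    by_contra! hrv
    exact h.2.2.2 ⟨v, hv, hrv, hvt1.trans_lt h1⟩
  exact (hvt0.trans_lt h0).ne (h.1.2.2 v hv.1 hv.2.1 (hvt0.trans h0.le) hvr1).1

theorem ConsecutiveMinimalVectors.apply_zero_mul_apply_zero_neg [DiscreteTopology Λ]
    (h : ConsecutiveMinimalVectors Λ r s) (hr1 : 0 ≤ r 1) (hrs : r 1 < s 1)
    (hsign : r 1 = 0 → r 0 * s 0 ≤ 0) (hs0 : s 0 ≠ 0) : r 0 * s 0 < 0 := by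
  have hrs0 := h.2.1.abs_apply_zero_lt h.1.1 h.1.2.1 h.2.2.1
  have hr0 : r 0 ≠ 0 := abs_pos.1 ((abs_nonneg _).trans_lt hrs0)
  rcases hr1.eq_or_lt with hr1 | hr1
  · exact (hsign hr1.symm).lt_of_ne (mul_ne_zero hr0 hs0)
  by_contra! hpos
  have hsr := h.eq_zero_of_abs_lt (Λ.sub_mem h.2.1.1 h.1.1)
    (abs_sub_lt_of_mul_pos (hpos.lt_of_ne (mul_ne_zero hr0 hs0).symm) hrs0)
    (by rw [Pi.sub_apply, abs_of_pos (sub_pos.2 hrs), abs_of_pos (hr1.trans hrs)]; linarith)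
  have := congrFun hsr 1
  simp only [Pi.sub_apply, Pi.zero_apply] at this
  linarith

theorem IsMinimalVector.two_mul_abs_apply_zero_le (hs : IsMinimalVector Λ s) (hr : r ∈ Λ)
    (hr1 : r 1 = 0) (hs1 : s 1 ≠ 0) (hrs : r 0 * s 0 < 0) : 2 * |s 0| ≤ |r 0| := by
  by_contra! hlt
  have hsum : |(r + s) 0| < |s 0| := abs_add_lt_of_mul_neg hrs hlt
  have hrs0 : r + s ≠ 0 := fun h => hs1 (by simpa [hr1] using congrFun h 1)
  exact hsum.ne (hs.2.2 _ (Λ.add_mem hr hs.1) hrs0 hsum.le (by simp [hr1])).1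

theorem exists_eq_intCast_smul_add (hr : r ∈ Λ) (hs : s ∈ Λ) (h0 : |s 0| < |r 0|)
    (h1 : |r 1| < |s 1|) (hbox : ∀ t ∈ Λ, |t 0| < |r 0| → |t 1| < |s 1| → t = 0) (ht : t ∈ Λ) :
    ∃ a b : ℤ, t = (a : ℝ) • r + (b : ℝ) • s := by
  set d := r 0 * s 1 - r 1 * s 0
  have hdet : d ≠ 0 := by
    have : |r 1 * s 0| < |r 0 * s 1| := by
      rw [abs_mul, abs_mul]
      calc |r 1| * |s 0| ≤ |s 1| * |s 0| := by gcongr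
        _ < |s 1| * |r 0| := by gcongr; exact (abs_nonneg _).trans_lt h1
        _ = |r 0| * |s 1| := mul_comm _ _
    intro h
    rw [sub_eq_zero.1 h] at this
    exact this.false
  obtain ⟨α, β, hαβ⟩ : ∃ α β : ℝ, t = α • r + β • s := by
    refine ⟨(t 0 * s 1 - t 1 * s 0) / d, (r 0 * t 1 - r 1 * t 0) / d,
      funext (Fin.forall_fin_two.2 ⟨?_, ?_⟩)⟩ <;>
    · simp only [Pi.add_apply, Pi.smul_apply, smul_eq_mul]
      field_simp
      ring
  set u := t - ((round α : ℝ) • r + (round β : ℝ) • s)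
  have hu : ∀ i, |u i| ≤ (|r i| + |s i|) / 2 := fun i => by
    have : u i = (α - round α) * r i + (β - round β) * s i := by
      simp only [u, hαβ, Pi.sub_apply, Pi.add_apply, Pi.smul_apply, smul_eq_mul]
      ring
    exact this ▸ abs_mul_add_mul_le (abs_sub_round α) (abs_sub_round β)
  refine ⟨round α, round β, sub_eq_zero.1 (hbox u ?_ ?_ ?_)⟩
  · exact Λ.sub_mem ht (Λ.add_mem (intCast_smul_mem _ hr) (intCast_smul_mem _ hs))
  · linarith [hu 0]
  · linarith [hu 1]

end Lattice

section Step

variable {Λ : AddSubgroup (Fin 2 → ℝ)} {r s : Fin 2 → ℝ} {x : ℝ}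

lemma floor_inv_mul_le (hx : 0 < x) : (⌊x⁻¹⌋ : ℝ) * x ≤ 1 := by
  simpa [hx.ne'] using mul_le_mul_of_nonneg_right (Int.floor_le x⁻¹) hx.le

lemma one_lt_floor_inv_add_one_mul (hx : 0 < x) : 1 < ((⌊x⁻¹⌋ : ℝ) + 1) * x := by
  simpa [hx.ne'] using mul_lt_mul_of_pos_right (Int.lt_floor_add_one x⁻¹) hx

lemma intCast_smul_add_apply_zero (hsx : s 0 = -x * r 0) (a b : ℤ) :
    ((a : ℝ) • r + (b : ℝ) • s) 0 = r 0 * (a - b * x) := by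
  simp only [Pi.add_apply, Pi.smul_apply, smul_eq_mul, hsx]
  ring

theorem lt_add_floor_inv_smul (hs : IsMinimalVector Λ s) (hr : r ∈ Λ) (hr0 : r 0 ≠ 0)
    (hsx : s 0 = -x * r 0) (hx0 : 0 < x) (hx1 : x < 1) (hr1 : 0 ≤ r 1) (hs1 : 0 < s 1) :
    s 1 < (r + (⌊x⁻¹⌋ : ℝ) • s) 1 := by
  change s 1 < r 1 + ⌊x⁻¹⌋ * s 1
  rcases hr1.eq_or_lt with hr1 | hr1
  · have hrs : r 0 * s 0 < 0 := by rw [hsx]; nlinarith [sq_pos_of_ne_zero hr0]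
    have h2 := hs.two_mul_abs_apply_zero_le hr hr1.symm hs1.ne' hrs
    rw [hsx, abs_mul, abs_neg, abs_of_pos hx0] at h2
    have h2x : (2 : ℝ) ≤ ⌊x⁻¹⌋ := by
      have : 2 * x ≤ 1 := by nlinarith [abs_pos.2 hr0]
      exact_mod_cast Int.le_floor.2 (by push_cast; rw [le_inv_comm₀ two_pos hx0]; linarith)
    nlinarith
  · have h1 : (1 : ℝ) ≤ ⌊x⁻¹⌋ := by
      exact_mod_cast Int.le_floor.2 (by push_cast; exact (one_le_inv₀ hx0).2 hx1.le)
    nlinarith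

theorem isMinimalVector_add_floor_inv_smul
    (hbasis : ∀ t ∈ Λ, ∃ a b : ℤ, t = (a : ℝ) • r + (b : ℝ) • s) (hr : r ∈ Λ) (hs : s ∈ Λ)
    (hr0 : r 0 ≠ 0) (hsx : s 0 = -x * r 0) (hx0 : 0 < x) (hr1 : 0 ≤ r 1) (hs1 : 0 < s 1)
    (hsw : s 1 < (r + (⌊x⁻¹⌋ : ℝ) • s) 1) :
    IsMinimalVector Λ (r + (⌊x⁻¹⌋ : ℝ) • s) := by
  set n := ⌊x⁻¹⌋
  have hw : r + (n : ℝ) • s = ((1 : ℤ) : ℝ) • r + (n : ℝ) • s := by rw [Int.cast_one, one_smul]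
  have hw0 : |(r + (n : ℝ) • s) 0| = |r 0| * (1 - n * x) := by
    rw [hw, intCast_smul_add_apply_zero hsx, abs_mul, Int.cast_one,
      abs_of_nonneg (sub_nonneg.2 (floor_inv_mul_le hx0))]
  have hw1 : |(r + (n : ℝ) • s) 1| = r 1 + n * s 1 := abs_of_pos (hs1.trans hsw)
  refine ⟨Λ.add_mem hr (intCast_smul_mem n hs), fun h => (hs1.trans hsw).ne' (congrFun h 1), ?_⟩
  rintro t ht ht0 h0 h1
  obtain ⟨a, b, rfl⟩ := hbasis t ht
  have hab : a ≠ 0 ∨ b ≠ 0 := by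
    contrapose! ht0
    simp [ht0]
  rw [intCast_smul_add_apply_zero hsx, abs_mul, hw0] at h0
  rw [hw1] at h1
  rcases eq_one_and_eq_of_abs_le hx0 hr1 hs1 (by linarith [one_lt_floor_inv_add_one_mul hx0])
    hab (le_of_mul_le_mul_left h0 (abs_pos.2 hr0)) h1 with ⟨rfl, rfl⟩ | ⟨rfl, rfl⟩
  · rw [← hw]
    exact ⟨rfl, rfl⟩
  · rw [Int.cast_neg, Int.cast_neg, neg_smul, neg_smul, ← neg_add, ← hw]
    simp only [Pi.neg_apply, abs_neg, and_self]

theorem not_exists_isMinimalVector_between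
    (hbasis : ∀ t ∈ Λ, ∃ a b : ℤ, t = (a : ℝ) • r + (b : ℝ) • s) (hs : IsMinimalVector Λ s)
    (hsx : s 0 = -x * r 0) (hx0 : 0 < x) (hr1 : 0 ≤ r 1) (hs1 : 0 < s 1)
    (hsw : s 1 < (r + (⌊x⁻¹⌋ : ℝ) • s) 1) :
    ¬∃ v, IsMinimalVector Λ v ∧ |s 1| < |v 1| ∧ |v 1| < |(r + (⌊x⁻¹⌋ : ℝ) • s) 1| := by
  rintro ⟨v, hv, hsv, hvw⟩
  have hv0 := hv.abs_apply_zero_lt hs.1 hs.2.1 hsv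
  obtain ⟨a, b, rfl⟩ := hbasis v hv.1
  have hab : a ≠ 0 ∨ b ≠ 0 := by
    contrapose! hv
    simp [hv, IsMinimalVector]
  rw [intCast_smul_add_apply_zero hsx, hsx, abs_mul, abs_mul, abs_neg, abs_of_pos hx0,
    mul_comm x] at hv0
  rw [abs_of_pos (hs1.trans hsw)] at hvw
  exact (lt_of_mul_lt_mul_left hv0 (abs_nonneg _)).not_ge
    (le_abs_sub_mul_of_abs_lt hx0 (floor_inv_mul_le hx0) hr1 hs1 hab hvw)

theorem consecutiveMinimalVectors_add_floor_inv_smul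
    (hbasis : ∀ t ∈ Λ, ∃ a b : ℤ, t = (a : ℝ) • r + (b : ℝ) • s) (hs : IsMinimalVector Λ s)
    (hr : r ∈ Λ) (hr0 : r 0 ≠ 0) (hsx : s 0 = -x * r 0) (hx0 : 0 < x) (hx1 : x < 1)
    (hr1 : 0 ≤ r 1) (hs1 : 0 < s 1) :
    ConsecutiveMinimalVectors Λ s (r + (⌊x⁻¹⌋ : ℝ) • s) := by
  have hsw := lt_add_floor_inv_smul hs hr hr0 hsx hx0 hx1 hr1 hs1
  refine ⟨hs, isMinimalVector_add_floor_inv_smul hbasis hr hs.1 hr0 hsx hx0 hr1 hs1 hsw, ?_,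
    not_exists_isMinimalVector_between hbasis hs hsx hx0 hr1 hs1 hsw⟩
  rwa [abs_of_pos hs1, abs_of_pos (hs1.trans hsw)]

end Step

/-- Let `(r, s)` be consecutive minimal vectors of a unimodular lattice with
`0 ≤ r₂ < s₂`, with `r₁s₁ ≤ 0` whenever `r₂ = 0`, and with `s₁ ≠ 0`. Then `r₁ ≠ 0`,
`x = −s₁/r₁ > 0`, and with `y = r₂/s₂`, `n = ⌊1/x⌋` and `w = r + n·s`: the pair
`(s, w)` is a pair of consecutive minimal vectors with `0 ≤ s₂ < w₂`, the sign of `s₁`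
is opposite to that of `r₁`, `−w₁/s₁ = {1/x}`, and `s₂/w₂ = 1/(⌊1/x⌋ + y)`. -/
theorem stmt15 (g : SL2R) (r s : Fin 2 → ℝ)
    (h : ConsecutiveMinimalVectors (latticePts g) r s)
    (h1 : 0 ≤ r 1) (h2 : r 1 < s 1) (h3 : r 1 = 0 → r 0 * s 0 ≤ 0) (hs0 : s 0 ≠ 0) :
    r 0 ≠ 0 ∧ 0 < -(s 0) / r 0 ∧
      ∀ (x y : ℝ) (n : ℤ) (w : Fin 2 → ℝ),
        x = -(s 0) / r 0 → y = r 1 / s 1 → n = ⌊x⁻¹⌋ → w = r + (n : ℝ) • s →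
          ConsecutiveMinimalVectors (latticePts g) s w ∧
            0 ≤ s 1 ∧ s 1 < w 1 ∧ s 0 * r 0 < 0 ∧
            -(w 0) / s 0 = Int.fract x⁻¹ ∧ s 1 / w 1 = ((⌊x⁻¹⌋ : ℝ) + y)⁻¹ := by
  rw [← coe_latticeAddSubgroup] at h ⊢
  have hs1 : 0 < s 1 := h1.trans_lt h2
  have hrs0 : |s 0| < |r 0| := h.2.1.abs_apply_zero_lt h.1.1 h.1.2.1 h.2.2.1
  have hr0 : r 0 ≠ 0 := abs_pos.1 ((abs_nonneg _).trans_lt hrs0)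
  have hrs : r 0 * s 0 < 0 := h.apply_zero_mul_apply_zero_neg h1 h2 h3 hs0
  have hx0 : 0 < -(s 0) / r 0 := by
    rw [← mul_div_mul_left _ _ hr0, ← neg_mul_eq_mul_neg]
    exact div_pos (neg_pos.2 hrs) (mul_self_pos.2 hr0)
  refine ⟨hr0, hx0, ?_⟩
  rintro x y n w hx rfl rfl rfl
  have hsx : s 0 = -x * r 0 := by rw [hx]; field_simp
  replace hx0 : 0 < x := hx ▸ hx0
  have hx1 : x < 1 := by
    rwa [hsx, abs_mul, abs_neg, abs_of_pos hx0, mul_lt_iff_lt_one_left (abs_pos.2 hr0)]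
      at hrs0
  have hbasis := fun t (ht : t ∈ latticeAddSubgroup g) => exists_eq_intCast_smul_add h.1.1
    h.2.1.1 hrs0 h.2.2.1 (fun _ => h.eq_zero_of_abs_lt) ht
  refine ⟨consecutiveMinimalVectors_add_floor_inv_smul hbasis h.2.1 h.1.1 hr0 hsx hx0 hx1 h1 hs1,
    hs1.le, lt_add_floor_inv_smul h.2.1 h.1.1 hr0 hsx hx0 hx1 h1 hs1, mul_comm (s 0) (r 0) ▸ hrs,
    ?_, ?_⟩
  · change -(r 0 + ⌊x⁻¹⌋ * s 0) / s 0 = Int.fract x⁻¹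
    rw [← Int.self_sub_floor, hsx]
    field_simp
    ring
  · change s 1 / (r 1 + ⌊x⁻¹⌋ * s 1) = (⌊x⁻¹⌋ + r 1 / s 1)⁻¹
    field_simp
    ring
end
end
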